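/- Assume good X, ↑good inp, ↑goodAbs binp, |dom inp| < |var| and |dom binp| < |var|. Then the simplification rules for freshness hold as equivalences: (1) fresh ys y (Var xs x) if and only if (ys,y) ≠ (xs,x); (2) fresh ys y (Op δ inp binp) if and only if ↑(fresh ys y) inp and ↑(freshAbs ys y) binp; (3) freshAbs ys y (Abs xs x X) if and only if (ys,y) = (xs,x) or fresh ys y X. -/

import Mathlib

open scoped Classical

universe u

section Binding

variable (var varsort index bindex opsym : Type u)

/-! ### Inputs -/

/-- An `(α,β)`-input: a partial function from `α` to `β`. -/
abbrev Input (α β : Type u) : Type u := α → Option β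

/-- The domain of an input. -/
def idom {α β : Type u} (inp : Input α β) : Set α := {a | inp a ≠ none}

/-- The componentwise lifting of a predicate to inputs. -/
def liftP {α β : Type u} (P : β → Prop) (inp : Input α β) : Prop :=
  ∀ a b, inp a = some b → P b

/-- The componentwise lifting of a function to inputs. -/
def liftF {α β γ : Type u} (f : β → γ) (inp : Input α β) : Input α γ :=
  fun a => (inp a).map f

/-- An input is small if its domain has cardinality smaller than that of `var`. -/
def smallDom {α β : Type u} (inp : Input α β) : Prop :=
  Cardinal.mk (idom inp) < Cardinal.mk var

/-! ### Quasiterms -/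

mutual
/-- Quasiterms: raw terms before quotienting by alpha-equivalence. -/
inductive QTerm : Type u where
  | qVar : varsort → var → QTerm
  | qOp : opsym → (index → Option QTerm) → (bindex → Option QAbs) → QTerm
/-- Quasiabstractions. -/
inductive QAbs : Type u where
  | qAbs : varsort → var → QTerm → QAbs
end

/-- Transposition of two variables. -/
noncomputable def swapVar (z1 z2 x : var) : var :=
  if x = z1 then z2 else if x = z2 then z1 else x

/-- Sort-aware transposition of variables (acts only on variables of varsort `zs`). -/
noncomputable def swapVarS (zs xs : varsort) (z1 z2 x : var) : var :=
  if xs = zs then swapVar var z1 z2 x else x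

variable {var varsort index bindex opsym}

/-- Swapping of the variables `z1`, `z2` at varsort `zs` in a quasiterm
(transposing them everywhere, including binding positions). -/
noncomputable def qSwap (z1 z2 : var) (zs : varsort) :
    QTerm var varsort index bindex opsym → QTerm var varsort index bindex opsym :=
  QTerm.rec (motive_1 := fun _ => QTerm var varsort index bindex opsym)
    (motive_2 := fun _ => QAbs var varsort index bindex opsym)
    (motive_3 := fun _ => Option (QTerm var varsort index bindex opsym))
    (motive_4 := fun _ => Option (QAbs var varsort index bindex opsym))
    (fun xs x => .qVar xs (swapVarS var varsort zs xs z1 z2 x))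
    (fun d _ _ rinp rbinp => .qOp d rinp rbinp)
    (fun xs x _ rX => .qAbs xs (swapVarS var varsort zs xs z1 z2 x) rX)
    none (fun _ r => some r) none (fun _ r => some r)

/-- Swapping of variables in a quasiabstraction. -/
noncomputable def qSwapAbs (z1 z2 : var) (zs : varsort) :
    QAbs var varsort index bindex opsym → QAbs var varsort index bindex opsym
  | .qAbs xs x X => .qAbs xs (swapVarS var varsort zs xs z1 z2 x) (qSwap z1 z2 zs X)

/-! ### Freshness and goodness -/

mutual
/-- `QFresh ys y X`: the variable `y` of varsort `ys` has no free occurrence in `X`. -/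
inductive QFresh : varsort → var → QTerm var varsort index bindex opsym → Prop where
  | qVar : ∀ {ys y xs x}, (ys, y) ≠ (xs, x) → QFresh ys y (.qVar xs x)
  | qOp : ∀ {ys y d inp binp}, (∀ i X, inp i = some X → QFresh ys y X) →
      (∀ j A, binp j = some A → QFreshAbs ys y A) → QFresh ys y (.qOp d inp binp)
/-- Freshness for quasiabstractions. -/
inductive QFreshAbs : varsort → var → QAbs var varsort index bindex opsym → Prop where
  | qAbs_bound : ∀ {xs x X}, QFreshAbs xs x (.qAbs xs x X)
  | qAbs_body : ∀ {ys y xs x X}, QFresh ys y X → QFreshAbs ys y (.qAbs xs x X)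
end

mutual
/-- Good quasiterms: all constructors branch less than `|var|`. -/
inductive QGood : QTerm var varsort index bindex opsym → Prop where
  | qVar : ∀ {xs x}, QGood (.qVar xs x)
  | qOp : ∀ {d inp binp}, (∀ i X, inp i = some X → QGood X) →
      (∀ j A, binp j = some A → QGoodAbs A) →
      smallDom var inp → smallDom var binp → QGood (.qOp d inp binp)
/-- Good quasiabstractions. -/
inductive QGoodAbs : QAbs var varsort index bindex opsym → Prop where
  | qAbs : ∀ {xs x X}, QGood X → QGoodAbs (.qAbs xs x X)
end

/-! ### Alpha-equivalence -/

mutual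
/-- Alpha-equivalence of quasiterms. -/
inductive Alpha : QTerm var varsort index bindex opsym →
    QTerm var varsort index bindex opsym → Prop where
  | qVar : ∀ {xs x}, Alpha (.qVar xs x) (.qVar xs x)
  | qOp : ∀ {d inp binp inp' binp'},
      (∀ i, inp i = none ↔ inp' i = none) →
      (∀ i X X', inp i = some X → inp' i = some X' → Alpha X X') →
      (∀ j, binp j = none ↔ binp' j = none) →
      (∀ j A A', binp j = some A → binp' j = some A' → AlphaAbs A A') →
      Alpha (.qOp d inp binp) (.qOp d inp' binp')
/-- Alpha-equivalence of quasiabstractions (the exists-fresh formulation). -/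
inductive AlphaAbs : QAbs var varsort index bindex opsym →
    QAbs var varsort index bindex opsym → Prop where
  | qAbs : ∀ {xs x x' X X' y}, y ∉ ({x, x'} : Set var) →
      QFresh xs y X → QFresh xs y X' →
      Alpha (qSwap y x xs X) (qSwap y x' xs X') →
      AlphaAbs (.qAbs xs x X) (.qAbs xs x' X')
end

/-! ### Terms and abstractions as quotients -/

variable (var varsort index bindex opsym)

/-- Terms: quasiterms modulo alpha-equivalence. -/
def Term : Type u := Quot (@Alpha var varsort index bindex opsym)

/-- Abstractions: quasiabstractions modulo alpha-equivalence. -/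
def Abstr : Type u := Quot (@AlphaAbs var varsort index bindex opsym)

variable {var varsort index bindex opsym}

/-- The projection from quasiterms to terms. -/
def tmk : QTerm var varsort index bindex opsym → Term var varsort index bindex opsym :=
  Quot.mk _

/-- The projection from quasiabstractions to abstractions. -/
def amk : QAbs var varsort index bindex opsym → Abstr var varsort index bindex opsym :=
  Quot.mk _

/-- A representative of a term. -/
noncomputable def trep (X : Term var varsort index bindex opsym) :
    QTerm var varsort index bindex opsym := Quot.out X

/-- A representative of an abstraction. -/
noncomputable def arep (A : Abstr var varsort index bindex opsym) :
    QAbs var varsort index bindex opsym := Quot.out A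

/-- Good terms. -/
def good (X : Term var varsort index bindex opsym) : Prop := QGood (trep X)

/-- Good abstractions. -/
def goodAbs (A : Abstr var varsort index bindex opsym) : Prop := QGoodAbs (arep A)

/-- The variable-injection constructor on terms. -/
def Var (xs : varsort) (x : var) : Term var varsort index bindex opsym :=
  tmk (.qVar xs x)

/-- The operation constructor on terms. -/
noncomputable def Op (d : opsym) (inp : Input index (Term var varsort index bindex opsym))
    (binp : Input bindex (Abstr var varsort index bindex opsym)) :
    Term var varsort index bindex opsym :=
  tmk (.qOp d (liftF trep inp) (liftF arep binp))

/-- The abstraction constructor. -/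
noncomputable def Abs (xs : varsort) (x : var) (X : Term var varsort index bindex opsym) :
    Abstr var varsort index bindex opsym :=
  amk (.qAbs xs x (trep X))

/-- Freshness on terms. -/
def fresh (ys : varsort) (y : var) (X : Term var varsort index bindex opsym) : Prop :=
  QFresh ys y (trep X)

/-- Freshness on abstractions. -/
def freshAbs (ys : varsort) (y : var) (A : Abstr var varsort index bindex opsym) : Prop :=
  QFreshAbs ys y (arep A)

/-- Swapping on terms. -/
noncomputable def tswap (X : Term var varsort index bindex opsym)
    (z1 z2 : var) (zs : varsort) : Term var varsort index bindex opsym :=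
  tmk (qSwap z1 z2 zs (trep X))

/-! ### Substitution -/

mutual
/-- The graph of capture-avoiding substitution on quasiterms:
`QSubst X Y y ys Z` means that `Z` is a result of substituting `Y` for the free
occurrences of the variable `y` of varsort `ys` in `X` (along a capture-free
representative). -/
inductive QSubst : QTerm var varsort index bindex opsym →
    QTerm var varsort index bindex opsym → var → varsort →
    QTerm var varsort index bindex opsym → Prop where
  | var_eq : ∀ {Y y ys}, QSubst (.qVar ys y) Y y ys Y
  | var_ne : ∀ {Y y ys xs x}, (xs, x) ≠ (ys, y) → QSubst (.qVar xs x) Y y ys (.qVar xs x)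
  | op : ∀ {Y y ys d inp binp inp' binp'},
      (∀ i, inp i = none ↔ inp' i = none) →
      (∀ i X X', inp i = some X → inp' i = some X' → QSubst X Y y ys X') →
      (∀ j, binp j = none ↔ binp' j = none) →
      (∀ j A A', binp j = some A → binp' j = some A' → QSubstAbs A Y y ys A') →
      QSubst (.qOp d inp binp) Y y ys (.qOp d inp' binp')
/-- The graph of capture-avoiding substitution on quasiabstractions. -/
inductive QSubstAbs : QAbs var varsort index bindex opsym →
    QTerm var varsort index bindex opsym → var → varsort →
    QAbs var varsort index bindex opsym → Prop where
  | abs : ∀ {Y y ys xs x X X'}, (xs, x) ≠ (ys, y) → QFresh xs x Y →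
      QSubst X Y y ys X' → QSubstAbs (.qAbs xs x X) Y y ys (.qAbs xs x X')
end

/-- The graph of capture-avoiding substitution on terms. -/
def SubstRel (X Y : Term var varsort index bindex opsym) (y : var) (ys : varsort)
    (Z : Term var varsort index bindex opsym) : Prop :=
  ∃ qX qZ, tmk qX = X ∧ tmk qZ = Z ∧ QSubst qX (trep Y) y ys qZ

/-- Capture-avoiding substitution on terms: `subst X Y y ys` is `X[Y/y]_ys`. -/
noncomputable def subst (X Y : Term var varsort index bindex opsym)
    (y : var) (ys : varsort) : Term var varsort index bindex opsym :=
  if h : ∃ Z, SubstRel X Y y ys Z then h.choose else X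

/-- The graph of capture-avoiding substitution on abstractions. -/
def SubstAbsRel (A : Abstr var varsort index bindex opsym)
    (Y : Term var varsort index bindex opsym) (y : var) (ys : varsort)
    (B : Abstr var varsort index bindex opsym) : Prop :=
  ∃ qA qB, amk qA = A ∧ amk qB = B ∧ QSubstAbs qA (trep Y) y ys qB

/-- Capture-avoiding substitution on abstractions: `substAbs A Y y ys` is `A[Y/y]_ys`. -/
noncomputable def substAbs (A : Abstr var varsort index bindex opsym)
    (Y : Term var varsort index bindex opsym) (y : var) (ys : varsort) :
    Abstr var varsort index bindex opsym :=
  if h : ∃ B, SubstAbsRel A Y y ys B then h.choose else A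

/-! ### Parallel substitution -/

mutual
/-- The graph of capture-avoiding parallel substitution on quasiterms, along an
assignment `ρ : varsort → var → Option qterm`. -/
inductive QPSubst : QTerm var varsort index bindex opsym →
    (varsort → var → Option (QTerm var varsort index bindex opsym)) →
    QTerm var varsort index bindex opsym → Prop where
  | var_some : ∀ {ρ xs x Y}, ρ xs x = some Y → QPSubst (.qVar xs x) ρ Y
  | var_none : ∀ {ρ xs x}, ρ xs x = none → QPSubst (.qVar xs x) ρ (.qVar xs x)
  | op : ∀ {ρ d inp binp inp' binp'},
      (∀ i, inp i = none ↔ inp' i = none) →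
      (∀ i X X', inp i = some X → inp' i = some X' → QPSubst X ρ X') →
      (∀ j, binp j = none ↔ binp' j = none) →
      (∀ j A A', binp j = some A → binp' j = some A' → QPSubstAbs A ρ A') →
      QPSubst (.qOp d inp binp) ρ (.qOp d inp' binp')
/-- The graph of capture-avoiding parallel substitution on quasiabstractions. -/
inductive QPSubstAbs : QAbs var varsort index bindex opsym →
    (varsort → var → Option (QTerm var varsort index bindex opsym)) →
    QAbs var varsort index bindex opsym → Prop where
  | abs : ∀ {ρ xs x X X'}, ρ xs x = none →
      (∀ ys y Y, ρ ys y = some Y → QFresh xs x Y) →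
      QPSubst X ρ X' → QPSubstAbs (.qAbs xs x X) ρ (.qAbs xs x X')
end

/-- Turning a term-valued assignment into a quasiterm-valued one, by picking
representatives. -/
noncomputable def qassign (ρ : varsort → var → Option (Term var varsort index bindex opsym)) :
    varsort → var → Option (QTerm var varsort index bindex opsym) :=
  fun xs x => (ρ xs x).map trep

/-- The graph of parallel substitution on terms. -/
def PSubstRel (X : Term var varsort index bindex opsym)
    (ρ : varsort → var → Option (Term var varsort index bindex opsym))
    (Z : Term var varsort index bindex opsym) : Prop :=
  ∃ qX qZ, tmk qX = X ∧ tmk qZ = Z ∧ QPSubst qX (qassign ρ) qZ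

/-- Capture-avoiding parallel substitution on terms: `psubst X ρ` is `X[ρ]`. -/
noncomputable def psubst (X : Term var varsort index bindex opsym)
    (ρ : varsort → var → Option (Term var varsort index bindex opsym)) :
    Term var varsort index bindex opsym :=
  if h : ∃ Z, PSubstRel X ρ Z then h.choose else X

/-- The graph of parallel substitution on abstractions. -/
def PSubstAbsRel (A : Abstr var varsort index bindex opsym)
    (ρ : varsort → var → Option (Term var varsort index bindex opsym))
    (B : Abstr var varsort index bindex opsym) : Prop :=
  ∃ qA qB, amk qA = A ∧ amk qB = B ∧ QPSubstAbs qA (qassign ρ) qB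

/-- Capture-avoiding parallel substitution on abstractions. -/
noncomputable def psubstAbs (A : Abstr var varsort index bindex opsym)
    (ρ : varsort → var → Option (Term var varsort index bindex opsym)) :
    Abstr var varsort index bindex opsym :=
  if h : ∃ B, PSubstAbsRel A ρ B then h.choose else A

/- Freshness is invariant under alpha-equivalence, hence computed on any representative; the
only non-structural case is that of abstractions. For `y₀ ≠ x` fresh in `X`, a variable is fresh
for `qAbs xs x X` iff it is `y₀` or is fresh for the swapped body `X[y₀ ∧ x]`: the swap sends the
bound `x` to the fresh `y₀` and fixes every variable other than `x` and `y₀`. The exists-fresh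
clause of alpha-equivalence relates exactly two such swapped bodies. -/

theorem Quot.out_mk_iff {α : Sort*} {r : α → α → Prop} {P : α → Prop}
    (hP : ∀ a b, r a b → (P a ↔ P b)) (a : α) : P (Quot.mk r a).out ↔ P a :=
  Iff.of_eq (congrArg (Quot.lift P fun a b h => propext (hP a b h)) (Quot.out_eq (Quot.mk r a)))

theorem liftP_liftF {α β γ : Type u} (P : γ → Prop) (f : β → γ) (inp : Input α β) :
    liftP P (liftF f inp) ↔ liftP (P ∘ f) inp := by
  simp [liftP, liftF]

theorem liftF_liftF {α β γ δ : Type u} (f : γ → δ) (g : β → γ) (inp : Input α β) :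
    liftF f (liftF g inp) = liftF (f ∘ g) inp := by
  funext a
  simp [liftF]

theorem liftF_eq_self {α β : Type u} {f : β → β} {inp : Input α β}
    (h : liftP (fun b => f b = b) inp) : liftF f inp = inp := by
  funext a
  cases ha : inp a with
  | none => simp [liftF, ha]
  | some b => simp [liftF, ha, h a b ha]

theorem liftP_congr {α β γ : Type u} {P : β → Prop} {Q : γ → Prop}
    {inp : Input α β} {inp' : Input α γ} (hdom : ∀ a, inp a = none ↔ inp' a = none)
    (h : ∀ a b c, inp a = some b → inp' a = some c → (P b ↔ Q c)) :
    liftP P inp ↔ liftP Q inp' := by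
  constructor
  · intro hP a c hc
    obtain ⟨b, hb⟩ := Option.ne_none_iff_exists'.mp fun hn => by simp [(hdom a).mp hn] at hc
    exact (h a b c hb hc).mp (hP a b hb)
  · intro hQ a b hb
    obtain ⟨c, hc⟩ := Option.ne_none_iff_exists'.mp fun hn => by simp [(hdom a).mpr hn] at hb
    exact (h a b c hb hc).mpr (hQ a c hc)

theorem swapVar_involutive (z1 z2 : var) : Function.Involutive (swapVar var z1 z2) := by
  intro x
  unfold swapVar
  split_ifs <;> simp_all

theorem swapVarS_involutive (zs xs : varsort) (z1 z2 : var) :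
    Function.Involutive (swapVarS var varsort zs xs z1 z2) := by
  intro x
  unfold swapVarS
  split_ifs
  · exact swapVar_involutive z1 z2 x
  · rfl

theorem QTerm.mutual_induction (P : QTerm var varsort index bindex opsym → Prop)
    (Q : QAbs var varsort index bindex opsym → Prop)
    (hvar : ∀ xs x, P (.qVar xs x))
    (hop : ∀ d inp binp, liftP P inp → liftP Q binp → P (.qOp d inp binp))
    (habs : ∀ xs x X, P X → Q (.qAbs xs x X)) :
    (∀ X, P X) ∧ (∀ A, Q A) := by
  have hP : ∀ X, P X := fun X =>
    QTerm.rec (motive_1 := P) (motive_2 := Q)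
      (motive_3 := fun o => ∀ X, o = some X → P X)
      (motive_4 := fun o => ∀ A, o = some A → Q A)
      hvar (fun d inp binp hinp hbinp => hop d inp binp hinp hbinp) habs
      (fun _ h => nomatch h) (fun _ hX _ h => Option.some.inj h ▸ hX)
      (fun _ h => nomatch h) (fun _ hA _ h => Option.some.inj h ▸ hA) X
  exact ⟨hP, fun ⟨xs, x, X⟩ => habs xs x X (hP X)⟩

section Swap

variable (z1 z2 : var) (zs : varsort)

@[simp]
theorem qSwap_qVar (xs : varsort) (x : var) :
    qSwap z1 z2 zs (QTerm.qVar (index := index) (bindex := bindex) (opsym := opsym) xs x)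
      = .qVar xs (swapVarS var varsort zs xs z1 z2 x) := rfl

@[simp]
theorem qSwap_qOp (d : opsym) (inp : Input index (QTerm var varsort index bindex opsym))
    (binp : Input bindex (QAbs var varsort index bindex opsym)) :
    qSwap z1 z2 zs (.qOp d inp binp)
      = .qOp d (liftF (qSwap z1 z2 zs) inp) (liftF (qSwapAbs z1 z2 zs) binp) := by
  show QTerm.qOp _ _ _ = _
  unfold liftF
  congr 1
  · funext i
    cases inp i <;> rfl
  · funext j
    rcases binp j with _ | ⟨xs, x, X⟩ <;> rfl

theorem qSwap_involutive :
    Function.Involutive (qSwap z1 z2 zs : QTerm var varsort index bindex opsym → _) := by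
  refine (QTerm.mutual_induction _ (fun A => qSwapAbs z1 z2 zs (qSwapAbs z1 z2 zs A) = A)
    ?_ ?_ ?_).1
  · intro xs x
    simp [swapVarS_involutive zs xs z1 z2 x]
  · intro d inp binp hinp hbinp
    rw [qSwap_qOp, qSwap_qOp, liftF_liftF, liftF_liftF, 
      liftF_eq_self (f := qSwap z1 z2 zs ∘ qSwap z1 z2 zs) hinp,
      liftF_eq_self (f := qSwapAbs z1 z2 zs ∘ qSwapAbs z1 z2 zs) hbinp]
  · intro xs x X hX
    show QAbs.qAbs _ _ _ = _
    rw [swapVarS_involutive, hX]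

end Swap

section Fresh

variable {ys : varsort} {y : var}

theorem qFresh_qVar_iff {xs : varsort} {x : var} :
    QFresh (index := index) (bindex := bindex) (opsym := opsym) ys y (.qVar xs x) ↔
      (ys, y) ≠ (xs, x) :=
  ⟨fun h => by cases h with | qVar hne => exact hne, QFresh.qVar⟩

theorem qFresh_qOp_iff {d : opsym} {inp : Input index (QTerm var varsort index bindex opsym)}
    {binp : Input bindex (QAbs var varsort index bindex opsym)} :
    QFresh ys y (.qOp d inp binp) ↔ liftP (QFresh ys y) inp ∧ liftP (QFreshAbs ys y) binp :=
  ⟨fun h => by cases h with | qOp hinp hbinp => exact ⟨hinp, hbinp⟩,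
    fun ⟨hinp, hbinp⟩ => QFresh.qOp hinp hbinp⟩

theorem qFreshAbs_qAbs_iff {xs : varsort} {x : var} {X : QTerm var varsort index bindex opsym} :
    QFreshAbs ys y (.qAbs xs x X) ↔ (ys, y) = (xs, x) ∨ QFresh ys y X := by
  constructor
  · rintro (_ | h)
    · exact Or.inl rfl
    · exact Or.inr h
  · rintro (h | h)
    · obtain ⟨rfl, rfl⟩ := Prod.mk.inj h
      exact QFreshAbs.qAbs_bound
    · exact QFreshAbs.qAbs_body h

theorem QFresh.qSwap (z1 z2 : var) (zs : varsort) {X : QTerm var varsort index bindex opsym}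
    (h : QFresh ys y X) :
    QFresh ys (swapVarS var varsort zs ys z1 z2 y) (qSwap z1 z2 zs X) := by
  refine QFresh.rec
    (motive_1 := fun X _ =>
      QFresh ys (swapVarS var varsort zs ys z1 z2 y) (_root_.qSwap z1 z2 zs X))
    (motive_2 := fun A _ =>
      QFreshAbs ys (swapVarS var varsort zs ys z1 z2 y) (qSwapAbs z1 z2 zs A))
    ?_ ?_ ?_ ?_ h
  · intro xs x hne
    rw [qSwap_qVar, qFresh_qVar_iff]
    intro hc
    obtain ⟨rfl, hyx⟩ := Prod.mk.inj hc
    exact hne (by rw [(swapVarS_involutive zs ys z1 z2).injective hyx])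
  · intro d inp binp _ _ hinp hbinp
    rw [qSwap_qOp, qFresh_qOp_iff, liftP_liftF, liftP_liftF]
    exact ⟨hinp, hbinp⟩
  · intro _
    exact QFreshAbs.qAbs_bound
  · intro _ _ _ _ hX
    exact QFreshAbs.qAbs_body hX

theorem qFresh_qSwap_iff (z1 z2 : var) (zs : varsort) {X : QTerm var varsort index bindex opsym} :
    QFresh ys y (qSwap z1 z2 zs X) ↔ QFresh ys (swapVarS var varsort zs ys z1 z2 y) X := by
  constructor
  · intro h
    simpa only [swapVarS_involutive zs ys z1 z2 y, qSwap_involutive z1 z2 zs X] using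
      h.qSwap z1 z2 zs
  · intro h
    simpa only [swapVarS_involutive zs ys z1 z2 y] using h.qSwap z1 z2 zs

theorem qFreshAbs_qAbs_iff_qSwap {xs : varsort} {x y₀ : var}
    {X : QTerm var varsort index bindex opsym} (hy₀x : y₀ ≠ x) (hy₀ : QFresh xs y₀ X) :
    QFreshAbs ys y (.qAbs xs x X) ↔ (ys, y) = (xs, y₀) ∨ QFresh ys y (qSwap y₀ x xs X) := by
  rw [qFreshAbs_qAbs_iff, qFresh_qSwap_iff]
  by_cases hs : ys = xs
  · subst hs
    by_cases hy : y = y₀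
    · subst hy
      simp [hy₀]
    by_cases hyx : y = x
    · subst hyx
      simp [swapVarS, swapVar, hy₀x.symm, hy₀]
    · simp [swapVarS, swapVar, hy, hyx]
  · simp [swapVarS, hs]

theorem qFreshAbs_qAbs_congr {xs : varsort} {x x' y₀ : var}
    {X X' : QTerm var varsort index bindex opsym} (hy₀ : y₀ ∉ ({x, x'} : Set var))
    (hX : QFresh xs y₀ X) (hX' : QFresh xs y₀ X')
    (hswap : ∀ ys y, QFresh ys y (qSwap y₀ x xs X) ↔ QFresh ys y (qSwap y₀ x' xs X')) :
    QFreshAbs ys y (.qAbs xs x X) ↔ QFreshAbs ys y (.qAbs xs x' X') := by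
  have hx : y₀ ≠ x := fun h => hy₀ (by simp [h])
  have hx' : y₀ ≠ x' := fun h => hy₀ (by simp [h])
  rw [qFreshAbs_qAbs_iff_qSwap hx hX, qFreshAbs_qAbs_iff_qSwap hx' hX', hswap]

theorem Alpha.qFresh_iff {X X' : QTerm var varsort index bindex opsym} (h : Alpha X X') :
    QFresh ys y X ↔ QFresh ys y X' := by
  revert ys y
  refine Alpha.rec
    (motive_1 := fun X X' _ => ∀ {ys y}, QFresh ys y X ↔ QFresh ys y X')
    (motive_2 := fun A A' _ => ∀ {ys y}, QFreshAbs ys y A ↔ QFreshAbs ys y A')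
    ?_ ?_ ?_ h
  · exact Iff.rfl
  · intro d inp binp inp' binp' hdom _ hbdom _ hinp hbinp ys y
    rw [qFresh_qOp_iff, qFresh_qOp_iff,
      liftP_congr hdom fun i X X' h h' => hinp i X X' h h',
      liftP_congr hbdom fun j A A' h h' => hbinp j A A' h h']
  · intro xs x x' X X' y₀ hy₀ hX hX' _ hswap
    exact qFreshAbs_qAbs_congr hy₀ hX hX' fun _ _ => hswap

theorem AlphaAbs.qFreshAbs_iff {A A' : QAbs var varsort index bindex opsym} (h : AlphaAbs A A') :
    QFreshAbs ys y A ↔ QFreshAbs ys y A' := by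
  obtain ⟨hy₀, hX, hX', hswap⟩ := h
  exact qFreshAbs_qAbs_congr hy₀ hX hX' fun _ _ => hswap.qFresh_iff

theorem fresh_tmk (q : QTerm var varsort index bindex opsym) :
    fresh ys y (tmk q) ↔ QFresh ys y q :=
  Quot.out_mk_iff (fun _ _ h => h.qFresh_iff) q

theorem freshAbs_amk (q : QAbs var varsort index bindex opsym) :
    freshAbs ys y (amk q) ↔ QFreshAbs ys y q :=
  Quot.out_mk_iff (fun _ _ h => h.qFreshAbs_iff) q

end Fresh

/-- the simplification rules for freshness hold as equivalences. -/
theorem fresh_simp_iff (hinf : Cardinal.aleph0 ≤ Cardinal.mk var)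
    (hreg : (Cardinal.mk var).IsRegular)
    (X : Term var varsort index bindex opsym) (d : opsym)
    (inp : Input index (Term var varsort index bindex opsym)) (binp : Input bindex (Abstr var varsort index bindex opsym))
    (hX : good X) (hinp : liftP good inp) (hbinp : liftP goodAbs binp)
    (hsi : smallDom var inp) (hsb : smallDom var binp)
    (ys xs : varsort) (y x : var) :
    (fresh ys y (Var xs x : Term var varsort index bindex opsym) ↔ (ys, y) ≠ (xs, x)) ∧
    (fresh ys y (Op d inp binp) ↔
      liftP (fresh ys y) inp ∧ liftP (freshAbs ys y) binp) ∧
    (freshAbs ys y (Abs xs x X) ↔ ((ys, y) = (xs, x) ∨ fresh ys y X)) := by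
  refine ⟨?_, ?_, ?_⟩
  · rw [Var, fresh_tmk, qFresh_qVar_iff]
  · rw [Op, fresh_tmk, qFresh_qOp_iff, liftP_liftF, liftP_liftF]
    rfl
  · rw [Abs, freshAbs_amk, qFreshAbs_qAbs_iff]
    rfl

end Binding
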